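/- arXiv:1201.4877 — 6 statements merged into one kernel-verified Lean document; each statement's English description precedes it below -/
import Mathlib

section
/- Let G be a finite abelian group, ω a maximally non-commutative factor system on G, and V a projective representation of G with factor system ω (i.e., V(g)V(h) = ω(g,h)V(gh)). Then for every linear character χ of G there exists an element h_χ ∈ G such that V(h_χ)V(g) = χ(g) V(g) V(h_χ) for all g ∈ G. -/
/-- Bimultiplicativity lemma for the commutator pairing of a 2-cocycle on an abelian group. -/
lemma stmt4_mul_right {G : Type*} [CommGroup G] (ω : G → G → ℂˣ)
    (hcoc : ∀ g h k : G, ω g h * ω (g * h) k = ω h k * ω g (h * k)) (h g₁ g₂ : G) :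
    ω h (g₁ * g₂) * (ω (g₁ * g₂) h)⁻¹ =
      (ω h g₁ * (ω g₁ h)⁻¹) * (ω h g₂ * (ω g₂ h)⁻¹) := by
  have A := hcoc h g₁ g₂
  have B := hcoc g₁ h g₂
  have C := hcoc g₁ g₂ h
  rw [mul_comm h g₁] at A
  rw [mul_comm g₂ h] at C
  have A' : (ω h g₁ : ℂ) * ω (g₁ * h) g₂ = ω g₁ g₂ * ω h (g₁ * g₂) := by
    exact_mod_cast congrArg Units.val A
  have B' : (ω g₁ h : ℂ) * ω (g₁ * h) g₂ = ω h g₂ * ω g₁ (h * g₂) := by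
    exact_mod_cast congrArg Units.val B
  have C' : (ω g₁ g₂ : ℂ) * ω (g₁ * g₂) h = ω g₂ h * ω g₁ (h * g₂) := by
    exact_mod_cast congrArg Units.val C
  have key : (ω h (g₁ * g₂) : ℂ) * ω g₁ h * ω g₂ h = ω (g₁ * g₂) h * ω h g₁ * ω h g₂ := by
    have hp : (ω g₁ g₂ : ℂ) ≠ 0 := Units.ne_zero _
    apply mul_left_cancel₀ hp
    linear_combination (-((ω g₁ h : ℂ) * ω g₂ h)) * A' + ((ω h g₁ : ℂ) * ω g₂ h) * B'
      + (-((ω h g₁ : ℂ) * ω h g₂)) * C'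
  rw [Units.ext_iff]
  simp only [Units.val_mul, Units.val_inv_eq_inv_val]
  field_simp
  linear_combination key

lemma stmt4_one {G : Type*} [CommGroup G] (ω : G → G → ℂˣ)
    (hcoc : ∀ g h k : G, ω g h * ω (g * h) k = ω h k * ω g (h * k)) (g : G) :
    ω g 1 = ω 1 g := by
  have h1 := hcoc g 1 1
  have h2 := hcoc 1 1 g
  simp only [mul_one, one_mul] at h1 h2
  have e1 : ω g 1 = ω 1 1 := mul_right_cancel h1
  have e2 : ω 1 1 = ω 1 g := mul_right_cancel h2
  rw [e1, e2]

/-- For a projective representation V of a finite abelian group G with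
maximally non-commutative factor system ω, every linear character χ of G has an
element h_χ ∈ G with V(h_χ)V(g) = χ(g) V(g) V(h_χ) for all g. -/
theorem stmt_4 {G : Type*} [CommGroup G] [Fintype G] {n : ℕ}
    (ω : G → G → ℂˣ)
    (hcoc : ∀ g h k : G, ω g h * ω (g * h) k = ω h k * ω g (h * k))
    (hmax : ∀ g : G, (∀ h : G, ω g h = ω h g) → g = 1)
    (V : G → Matrix (Fin n) (Fin n) ℂ)
    (hVinv : ∀ g : G, IsUnit (V g))
    (hrep : ∀ g h : G, V g * V h = (ω g h : ℂ) • V (g * h))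
    (χ : G →* ℂˣ) :
    ∃ hχ : G, ∀ g : G, V hχ * V g = (χ g : ℂ) • (V g * V hχ) := by
  let φ : G →* (G →* ℂˣ) :=
    { toFun := fun h ↦
        { toFun := fun g ↦ ω h g * (ω g h)⁻¹
          map_one' := by
            show ω h 1 * (ω 1 h)⁻¹ = 1
            rw [stmt4_one ω hcoc h]
            group
          map_mul' := fun g₁ g₂ ↦ stmt4_mul_right ω hcoc h g₁ g₂ }
      map_one' := by
        ext g
        simp only [MonoidHom.coe_mk, OneHom.coe_mk, MonoidHom.one_apply]
        rw [← stmt4_one ω hcoc g]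
        group
      map_mul' := fun h₁ h₂ ↦ by
        ext g
        simp only [MonoidHom.mul_apply, MonoidHom.coe_mk, OneHom.coe_mk]
        have := stmt4_mul_right ω hcoc g h₁ h₂
        have h2 := congrArg (·⁻¹) this
        simp only [mul_inv, inv_inv] at h2
        rw [mul_comm (ω (h₁ * h₂) g), h2, mul_comm ((ω g h₁)⁻¹), mul_comm ((ω g h₂)⁻¹)] }
  have hinj : Function.Injective φ := by
    intro a b hab
    have h0 : φ (a * b⁻¹) = 1 := by rw [map_mul, hab, map_inv, mul_inv_cancel]
    have h1 : a * b⁻¹ = 1 := by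
      apply hmax
      intro h
      have := congrArg (fun f ↦ f h) h0
      simp only [MonoidHom.coe_mk, OneHom.coe_mk, MonoidHom.one_apply, φ] at this
      exact mul_inv_eq_one.mp this
    exact mul_inv_eq_one.mp h1
  have hne : NeZero ((Monoid.exponent G : ℂ)) :=
    ⟨Nat.cast_ne_zero.mpr Monoid.exponent_ne_zero_of_finite⟩
  obtain ⟨e⟩ := CommGroup.monoidHom_mulEquiv_of_hasEnoughRootsOfUnity G ℂ
  have hsurj : Function.Surjective φ := by
    have hinj' : Function.Injective (e ∘ φ) := e.injective.comp hinj
    have hbij : Function.Bijective (e ∘ φ) := Finite.injective_iff_bijective.mp hinj'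
    intro c
    obtain ⟨a, ha⟩ := hbij.surjective (e c)
    exact ⟨a, e.injective ha⟩
  obtain ⟨hχ, hhχ⟩ := hsurj χ
  refine ⟨hχ, fun g ↦ ?_⟩
  have hφ : ω hχ g * (ω g hχ)⁻¹ = χ g := by rw [← hhχ]; rfl
  have h1 : V hχ * V g = (ω hχ g : ℂ) • V (hχ * g) := hrep hχ g
  have h2 : V g * V hχ = (ω g hχ : ℂ) • V (hχ * g) := by rw [hrep g hχ, mul_comm g hχ]
  rw [h1, h2, smul_smul]
  congr 1
  have hu : (χ g) * (ω g hχ) = ω hχ g := by rw [← hφ, inv_mul_cancel_right]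
  exact_mod_cast (congrArg Units.val hu).symm
end

section
/- Let G be a finite abelian group with a maximally non-commutative factor system ω. Then any irreducible projective representation of G with factor system ω has dimension √|G|. -/
open Matrix


/-- Any irreducible projective representation of a finite abelian group G
with maximally non-commutative factor system ω has dimension √|G|, i.e. n² = |G|. -/
theorem stmt_8 {G : Type*} [CommGroup G] [Fintype G] {n : ℕ} (hn : 0 < n)
    (ω : G → G → ℂˣ)
    (hcoc : ∀ g h k : G, ω g h * ω (g * h) k = ω h k * ω g (h * k))
    (hmax : ∀ g : G, (∀ h : G, ω g h = ω h g) → g = 1)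
    (V : G → Matrix (Fin n) (Fin n) ℂ)
    (hVinv : ∀ g : G, IsUnit (V g))
    (hrep : ∀ g h : G, V g * V h = (ω g h : ℂ) • V (g * h))
    (hirr : ∀ p : Submodule ℂ (Fin n → ℂ),
      (∀ g : G, ∀ v ∈ p, (V g).mulVec v ∈ p) → p = ⊥ ∨ p = ⊤) :
    n * n = Fintype.card G := by
  classical
  haveI : NeZero n := ⟨hn.ne'⟩
  have hdet : ∀ g : G, IsUnit (V g).det := fun g =>
    (Matrix.isUnit_iff_isUnit_det _).mp (hVinv g)
  have hVV : ∀ g : G, V g * (V g)⁻¹ = 1 := fun g => Matrix.mul_nonsing_inv _ (hdet g)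
  have hVV' : ∀ g : G, (V g)⁻¹ * V g = 1 := fun g => Matrix.nonsing_inv_mul _ (hdet g)
  -- V 1 is the scalar ω 1 1
  have hV1 : V 1 = (ω 1 1 : ℂ) • (1 : Matrix (Fin n) (Fin n) ℂ) := by
    have h11 := hrep 1 1
    rw [one_mul] at h11
    calc V 1 = (V 1 * V 1) * (V 1)⁻¹ := by rw [mul_assoc, hVV, mul_one]
    _ = (ω 1 1 : ℂ) • (V 1 * (V 1)⁻¹) := by rw [h11, smul_mul_assoc]
    _ = (ω 1 1 : ℂ) • 1 := by rw [hVV]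
  have hV1inv : (V 1)⁻¹ = (((ω 1 1)⁻¹ : ℂˣ) : ℂ) • (1 : Matrix (Fin n) (Fin n) ℂ) := by
    apply Matrix.inv_eq_right_inv
    rw [hV1, smul_mul_assoc, mul_smul_comm, one_mul, smul_smul]
    norm_cast
    simp
  -- traces vanish off the identity
  have htr0 : ∀ g : G, g ≠ 1 → trace (V g) = 0 := by
    intro g hg
    obtain ⟨h, hh⟩ : ∃ h, ω g h ≠ ω h g := by
      by_contra hc; push_neg at hc; exact hg (hmax g hc)
    set a : ℂ := (ω g h : ℂ) with ha
    set b : ℂ := (ω h g : ℂ) with hb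
    have ha0 : a ≠ 0 := Units.ne_zero _
    have hab : b * a⁻¹ ≠ 1 := by
      intro hcon
      apply hh
      have hba : b = a := by field_simp at hcon; exact_mod_cast hcon
      exact Units.ext hba.symm
    have e1 : V h * V g = b • V (g * h) := by rw [hrep, mul_comm g h]
    have e2 : V (g * h) = a⁻¹ • (V g * V h) := by
      rw [hrep g h, smul_smul, inv_mul_cancel₀ ha0, one_smul]
    have key : V h * V g * (V h)⁻¹ = (b * a⁻¹) • V g := by
      rw [e1, e2, smul_smul, smul_mul_assoc, mul_assoc, hVV, mul_one]
    have tr1 : trace (V h * V g * (V h)⁻¹) = trace (V g) := by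
      rw [trace_mul_comm, ← mul_assoc, hVV', one_mul]
    rw [key, trace_smul, smul_eq_mul] at tr1
    by_contra htr
    exact hab (mul_right_cancel₀ htr (by rw [tr1, one_mul]))
  -- Schur's lemma
  have schur : ∀ M : Matrix (Fin n) (Fin n) ℂ,
      (∀ g : G, V g * M = M * V g) → ∃ c : ℂ, M = c • 1 := by
    intro M hM
    obtain ⟨c, hc⟩ := Module.End.exists_eigenvalue (Matrix.mulVecLin M)
    refine ⟨c, ?_⟩
    set p := Module.End.eigenspace (Matrix.mulVecLin M) c with hp
    have hinv : ∀ g : G, ∀ v ∈ p, (V g).mulVec v ∈ p := by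
      intro g v hv
      rw [hp, Module.End.mem_eigenspace_iff, Matrix.mulVecLin_apply] at hv ⊢
      rw [Matrix.mulVec_mulVec, ← hM g, ← Matrix.mulVec_mulVec, hv, Matrix.mulVec_smul]
    rcases hirr p hinv with h0 | htop
    · exact absurd h0 (Module.End.hasEigenvalue_iff.mp hc)
    · ext i j
      have hj : (Pi.single j 1 : Fin n → ℂ) ∈ p := htop ▸ Submodule.mem_top
      rw [hp, Module.End.mem_eigenspace_iff, Matrix.mulVecLin_apply] at hj
      have := congrFun hj i
      rw [Matrix.mulVec_single] at this
      simpa [Matrix.one_apply, Pi.single_apply, mul_comm] using this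
  -- entry lemma for basis matrices
  have entry : ∀ (A B : Matrix (Fin n) (Fin n) ℂ) (i j : Fin n),
      (A * Matrix.single i j 1 * B : Matrix (Fin n) (Fin n) ℂ) i j
        = A i i * B j j := by
    intro A B i j
    rw [mul_assoc, Matrix.mul_apply]
    rw [Finset.sum_eq_single i]
    · rw [Matrix.single_mul_apply_same, one_mul]
    · intro b _ hb
      rw [Matrix.single_mul_apply_of_ne _ _ _ _ _ hb, mul_zero]
    · simp
  -- averaged conjugation operator
  set F : Matrix (Fin n) (Fin n) ℂ → Matrix (Fin n) (Fin n) ℂ :=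
    fun M => ∑ g : G, V g * M * (V g)⁻¹ with hF
  have hFcomm : ∀ M, ∀ h : G, V h * F M = F M * V h := by
    intro M h
    rw [hF]
    simp only [Finset.mul_sum, Finset.sum_mul]
    rw [← Equiv.sum_comp (Equiv.mulLeft h) (fun g => V g * M * (V g)⁻¹ * V h)]
    refine Finset.sum_congr rfl fun g _ => ?_
    simp only [Equiv.coe_mulLeft]
    set a : ℂ := (ω h g : ℂ) with ha
    have ha0 : a ≠ 0 := Units.ne_zero _
    have e1 : V h * V g = a • V (h * g) := hrep h g
    have e2 : V (h * g) = a⁻¹ • (V h * V g) := by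
      rw [e1, smul_smul, inv_mul_cancel₀ ha0, one_smul]
    have e3 : (V (h * g))⁻¹ = a • ((V g)⁻¹ * (V h)⁻¹) := by
      apply Matrix.inv_eq_right_inv
      rw [e2, smul_mul_assoc, mul_smul_comm, smul_smul, inv_mul_cancel₀ ha0, one_smul]
      rw [mul_assoc, ← mul_assoc (V g), hVV, one_mul, hVV]
    rw [e3, e2]
    simp only [smul_mul_assoc, mul_smul_comm, smul_smul]
    rw [mul_inv_cancel₀ ha0, one_smul]
    simp only [mul_assoc]
    rw [hVV' h, mul_one]
  -- trace of F
  have hFtr : ∀ M, trace (F M) = (Fintype.card G : ℂ) * trace M := by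
    intro M
    rw [hF]
    rw [trace_sum]
    have heach : ∀ g : G, trace (V g * M * (V g)⁻¹) = trace M := by
      intro g
      rw [trace_mul_comm, ← mul_assoc, hVV', one_mul]
    simp [heach, Finset.sum_const, mul_comm]
  -- trace of std basis matrix
  have trstd : ∀ i j : Fin n,
      trace (Matrix.single i j (1:ℂ)) = (if i = j then (1:ℂ) else 0) := by
    intro i j
    by_cases hij : i = j
    · subst hij
      rw [Matrix.trace, Matrix.diag_single_same]
      simp
    · rw [Matrix.trace]
      have hk : ∀ k : Fin n, (Matrix.single i j (1:ℂ)).diag k = 0 := by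
        intro k
        rw [Matrix.diag_apply]
        apply Matrix.single_apply_of_ne
        rintro ⟨rfl, rfl⟩
        exact hij rfl
      rw [if_neg hij]
      exact Finset.sum_eq_zero fun k _ => hk k
  -- key orthogonality relation
  have key : ∀ i j : Fin n, (n : ℂ) * (∑ g : G, V g i i * (V g)⁻¹ j j)
      = (Fintype.card G : ℂ) * (if i = j then 1 else 0) := by
    intro i j
    obtain ⟨c, hc⟩ := schur (F (Matrix.single i j 1)) (fun h => hFcomm _ h)
    have hnc : c * n = (Fintype.card G : ℂ) * (if i = j then 1 else 0) := by
      have h1 := hFtr (Matrix.single i j 1)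
      rw [hc, trace_smul, trace_one, trstd, Fintype.card_fin, smul_eq_mul] at h1
      exact h1
    have hent : (F (Matrix.single i j 1)) i j = ∑ g : G, V g i i * (V g)⁻¹ j j := by
      simp only [hF, Matrix.sum_apply]
      exact Finset.sum_congr rfl fun g _ => entry (V g) ((V g)⁻¹) i j
    have hc' : (F (Matrix.single i j 1)) i j = c * (if i = j then 1 else 0) := by
      rw [hc, Matrix.smul_apply, Matrix.one_apply, smul_eq_mul]
    rw [← hent, hc', ← hnc]
    by_cases hij : i = j
    · rw [if_pos hij]
      ring
    · rw [if_neg hij] at hnc ⊢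
      rw [mul_zero] at hnc
      rcases mul_eq_zero.mp hnc with h0 | h0
      · rw [h0]
        ring
      · exact absurd h0 (Nat.cast_ne_zero.mpr hn.ne')
  -- the character sum, computed two ways
  have S1 : ∑ g : G, trace (V g) * trace ((V g)⁻¹) = (n:ℂ) * n := by
    rw [Fintype.sum_eq_single (1:G) (fun g hg => by rw [htr0 g hg, zero_mul])]
    rw [hV1inv, hV1, trace_smul, trace_smul, trace_one, Fintype.card_fin,
      smul_eq_mul, smul_eq_mul]
    have h0 : (ω 1 1 : ℂ) ≠ 0 := Units.ne_zero _
    rw [Units.val_inv_eq_inv_val]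
    field_simp
  have S2 : (n:ℂ) * ∑ g : G, trace (V g) * trace ((V g)⁻¹)
      = (n:ℂ) * (Fintype.card G : ℂ) := by
    have expand : ∑ g : G, trace (V g) * trace ((V g)⁻¹)
        = ∑ i : Fin n, ∑ j : Fin n, ∑ g : G, V g i i * (V g)⁻¹ j j := by
      have e1 : ∀ g : G, trace (V g) * trace ((V g)⁻¹)
          = ∑ i : Fin n, ∑ j : Fin n, V g i i * (V g)⁻¹ j j := by
        intro g
        rw [Matrix.trace, Matrix.trace, Finset.sum_mul_sum]
        rfl
      rw [Finset.sum_congr rfl fun g _ => e1 g, Finset.sum_comm]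
      exact Finset.sum_congr rfl fun i _ => Finset.sum_comm
    rw [expand, Finset.mul_sum]
    have hpush : ∀ i : Fin n, (n:ℂ) * ∑ j : Fin n, ∑ g : G, V g i i * (V g)⁻¹ j j
        = ∑ j : Fin n, (Fintype.card G : ℂ) * (if i = j then 1 else 0) := by
      intro i
      rw [Finset.mul_sum]
      exact Finset.sum_congr rfl fun j _ => key i j
    rw [Finset.sum_congr rfl fun i (_ : i ∈ Finset.univ) => hpush i]
    simp [mul_ite, mul_one, mul_zero, Finset.sum_ite_eq, mul_comm]
  have hne : (n : ℂ) ≠ 0 := Nat.cast_ne_zero.mpr hn.ne'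
  rw [S1] at S2
  have hfin : (n : ℂ) * n = (Fintype.card G : ℂ) := mul_left_cancel₀ hne S2
  exact_mod_cast hfin
end

section
/- Let G be a finite abelian group with a maximally non-commutative factor system ω. Then up to equivalence (simultaneous conjugation by an invertible operator) there is exactly one irreducible projective representation of G with factor system ω. -/
open LinearMap Module TensorProduct

section aux
variable {W W' : Type*} [AddCommGroup W] [Module ℂ W] [FiniteDimensional ℂ W]
  [AddCommGroup W'] [Module ℂ W'] [FiniteDimensional ℂ W']

/-- The conjugation operator `L ↦ A ∘ L ∘ B` on `Hom(W, W')`. -/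
noncomputable def conjL (A : W' →ₗ[ℂ] W') (B : W →ₗ[ℂ] W) :
    (W →ₗ[ℂ] W') →ₗ[ℂ] (W →ₗ[ℂ] W') where
  toFun L := A ∘ₗ L ∘ₗ B
  map_add' L₁ L₂ := by ext x; simp
  map_smul' c L := by ext x; simp

@[simp] lemma conjL_apply (A : W' →ₗ[ℂ] W') (B : W →ₗ[ℂ] W) (L : W →ₗ[ℂ] W') :
    conjL A B L = A ∘ₗ L ∘ₗ B := rfl

lemma trace_conjL (A : W' →ₗ[ℂ] W') (B : W →ₗ[ℂ] W) :
    trace ℂ _ (conjL A B) = trace ℂ W' A * trace ℂ W B := by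
  set e := dualTensorHomEquiv ℂ W W' with he
  have key : ∀ t : Module.Dual ℂ W ⊗[ℂ] W',
      conjL A B (e t) = e (TensorProduct.map B.dualMap A t) := by
    intro t
    induction t using TensorProduct.induction_on with
    | zero => simp only [e.map_zero, (conjL A B).map_zero, (TensorProduct.map B.dualMap A).map_zero]
    | tmul φ w => ext x; simp [he]
    | add x y hx hy => simp only [map_add, hx, hy]
  have h : conjL A B = e.conj (TensorProduct.map B.dualMap A) := by
    refine LinearMap.ext fun L => ?_
    have h2 := key (e.symm L)
    rw [e.apply_symm_apply] at h2
    simpa [LinearEquiv.conj_apply] using h2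
  rw [h, trace_conj', trace_tensorProduct', dualMap_def, trace_transpose', mul_comm]

end aux

/-- For a finite abelian group G with maximally non-commutative factor
system ω, any two irreducible projective representations with factor system ω are
equivalent (simultaneous conjugation by an invertible operator): there is exactly one
irreducible ω-projective representation up to equivalence. -/
theorem stmt_9 {G : Type*} [CommGroup G] [Fintype G]
    {W W' : Type*} [AddCommGroup W] [Module ℂ W] [FiniteDimensional ℂ W] [Nontrivial W]
    [AddCommGroup W'] [Module ℂ W'] [FiniteDimensional ℂ W'] [Nontrivial W']
    (ω : G → G → ℂˣ)
    (hcoc : ∀ g h k : G, ω g h * ω (g * h) k = ω h k * ω g (h * k))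
    (hmax : ∀ g : G, (∀ h : G, ω g h = ω h g) → g = 1)
    (V : G → (W →ₗ[ℂ] W)) (V' : G → (W' →ₗ[ℂ] W'))
    (hVinv : ∀ g : G, IsUnit (V g)) (hV'inv : ∀ g : G, IsUnit (V' g))
    (hrep : ∀ g h : G, V g * V h = (ω g h : ℂ) • V (g * h))
    (hrep' : ∀ g h : G, V' g * V' h = (ω g h : ℂ) • V' (g * h))
    (hirr : ∀ p : Submodule ℂ W, (∀ g : G, p.map (V g) ≤ p) → p = ⊥ ∨ p = ⊤)
    (hirr' : ∀ p : Submodule ℂ W', (∀ g : G, p.map (V' g) ≤ p) → p = ⊥ ∨ p = ⊤) :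
    ∃ S : W ≃ₗ[ℂ] W', ∀ g : G,
      V' g = S.toLinearMap ∘ₗ V g ∘ₗ S.symm.toLinearMap := by
  classical
  have hucoe : ∀ g : G, ((hVinv g).unit : W →ₗ[ℂ] W) = V g := fun g => (hVinv g).unit_spec
  have hu'coe : ∀ g : G, ((hV'inv g).unit : W' →ₗ[ℂ] W') = V' g := fun g => (hV'inv g).unit_spec
  have hmulinv : ∀ g : G, V g * (↑(hVinv g).unit⁻¹ : W →ₗ[ℂ] W) = 1 := fun g =>
    (hVinv g).mul_val_inv
  have hinvmul : ∀ g : G, (↑(hVinv g).unit⁻¹ : W →ₗ[ℂ] W) * V g = 1 := fun g =>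
    (hVinv g).val_inv_mul
  have h'mulinv : ∀ g : G, V' g * (↑(hV'inv g).unit⁻¹ : W' →ₗ[ℂ] W') = 1 := fun g =>
    (hV'inv g).mul_val_inv
  have hω11 : (ω 1 1 : ℂ) ≠ 0 := Units.ne_zero _
  -- V 1 and V' 1 are scalars
  have hV1 : V 1 = (ω 1 1 : ℂ) • (1 : W →ₗ[ℂ] W) := by
    have h := congrArg (fun X => X * (↑(hVinv 1).unit⁻¹ : W →ₗ[ℂ] W)) (hrep 1 1)
    simpa [mul_assoc, hmulinv 1, smul_mul_assoc] using h
  have hV'1 : V' 1 = (ω 1 1 : ℂ) • (1 : W' →ₗ[ℂ] W') := by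
    have h := congrArg (fun X => X * (↑(hV'inv 1).unit⁻¹ : W' →ₗ[ℂ] W')) (hrep' 1 1)
    simpa [mul_assoc, h'mulinv 1, smul_mul_assoc] using h
  -- the inverse of V 1
  have hinv1 : (↑(hVinv 1).unit⁻¹ : W →ₗ[ℂ] W) = (ω 1 1 : ℂ)⁻¹ • 1 := by
    calc (↑(hVinv 1).unit⁻¹ : W →ₗ[ℂ] W)
        = (ω 1 1 : ℂ)⁻¹ • ((↑(hVinv 1).unit⁻¹ : W →ₗ[ℂ] W) * ((ω 1 1 : ℂ) • 1)) := by
          rw [mul_smul_comm, mul_one, smul_smul, inv_mul_cancel₀ hω11, one_smul]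
      _ = (ω 1 1 : ℂ)⁻¹ • 1 := by rw [← hV1, hinvmul 1]
  -- traces
  have htrV'1 : LinearMap.trace ℂ W' (V' 1) = (ω 1 1 : ℂ) * (finrank ℂ W' : ℂ) := by
    rw [hV'1, map_smul, LinearMap.trace_one, smul_eq_mul]
  have htrinv1 : LinearMap.trace ℂ W (↑(hVinv 1).unit⁻¹ : W →ₗ[ℂ] W)
      = (ω 1 1 : ℂ)⁻¹ * (finrank ℂ W : ℂ) := by
    rw [hinv1, map_smul, LinearMap.trace_one, smul_eq_mul]
  -- vanishing of traces away from 1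
  have htr0 : ∀ g : G, g ≠ 1 → LinearMap.trace ℂ W' (V' g) = 0 := by
    intro g hg
    obtain ⟨h, hh⟩ : ∃ h : G, ω g h ≠ ω h g := by
      by_contra hc; push_neg at hc; exact hg (hmax g hc)
    have hgh0 : (ω g h : ℂ) ≠ 0 := Units.ne_zero _
    have hc1 : V' h * V' g = ((ω h g : ℂ) * (ω g h : ℂ)⁻¹) • (V' g * V' h) := by
      rw [hrep' g h, hrep' h g, mul_comm h g, smul_smul, mul_assoc,
        inv_mul_cancel₀ hgh0, mul_one]
    have hc2 : (↑(hV'inv h).unit : W' →ₗ[ℂ] W') * V' g * ↑(hV'inv h).unit⁻¹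
        = ((ω h g : ℂ) * (ω g h : ℂ)⁻¹) • V' g := by
      rw [hu'coe h, hc1, smul_mul_assoc, mul_assoc, h'mulinv h, mul_one]
    have hc3 := LinearMap.trace_conj (R := ℂ) (M := W') (V' g) (hV'inv h).unit
    rw [hc2, map_smul, smul_eq_mul] at hc3
    have hcne : (ω h g : ℂ) * (ω g h : ℂ)⁻¹ ≠ 1 := by
      intro hE
      rw [mul_inv_eq_one₀ hgh0] at hE
      exact hh (Units.ext hE).symm
    have h4 : ((ω h g : ℂ) * (ω g h : ℂ)⁻¹ - 1) * LinearMap.trace ℂ W' (V' g) = 0 := by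
      linear_combination hc3
    rcases mul_eq_zero.mp h4 with h5 | h5
    · exact absurd (by linear_combination h5) hcne
    · exact h5
  -- key relation for inverses
  have hkey : ∀ h g : G, (↑(hVinv (h*g)).unit⁻¹ : W →ₗ[ℂ] W) * V h
      = (ω h g : ℂ) • (↑(hVinv g).unit⁻¹ : W →ₗ[ℂ] W) := by
    intro h g
    calc (↑(hVinv (h*g)).unit⁻¹ : W →ₗ[ℂ] W) * V h
        = ↑(hVinv (h*g)).unit⁻¹ * V h * (V g * ↑(hVinv g).unit⁻¹) := by
          rw [hmulinv g, mul_one]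
      _ = ↑(hVinv (h*g)).unit⁻¹ * (V h * V g) * ↑(hVinv g).unit⁻¹ := by
          simp only [mul_assoc]
      _ = (ω h g : ℂ) • (↑(hVinv (h*g)).unit⁻¹ * V (h*g) * ↑(hVinv g).unit⁻¹) := by
          rw [hrep h g, mul_smul_comm, smul_mul_assoc]
      _ = (ω h g : ℂ) • (↑(hVinv g).unit⁻¹ : W →ₗ[ℂ] W) := by
          rw [hinvmul (h*g), one_mul]
  -- the averaging operator
  set Φ : (W →ₗ[ℂ] W') →ₗ[ℂ] (W →ₗ[ℂ] W') :=
    ∑ g : G, conjL (V' g) (↑(hVinv g).unit⁻¹) with hΦ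
  have compSumL : ∀ (A : W' →ₗ[ℂ] W') (F : G → (W →ₗ[ℂ] W')),
      A ∘ₗ (∑ g : G, F g) = ∑ g : G, A ∘ₗ F g := by
    intro A F; ext x
    simp [LinearMap.sum_apply, map_sum]
  have compSumR : ∀ (B : W →ₗ[ℂ] W) (F : G → (W →ₗ[ℂ] W')),
      (∑ g : G, F g) ∘ₗ B = ∑ g : G, F g ∘ₗ B := by
    intro B F; ext x
    simp [LinearMap.sum_apply]
  -- Φ L is always an intertwiner
  have hint : ∀ (L : W →ₗ[ℂ] W') (h : G), V' h ∘ₗ Φ L = Φ L ∘ₗ V h := by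
    intro L h
    have e1 : V' h ∘ₗ Φ L
        = ∑ g : G, (ω h g : ℂ) • (conjL (V' (h*g)) (↑(hVinv g).unit⁻¹) L) := by
      rw [hΦ, LinearMap.sum_apply, compSumL]
      refine Finset.sum_congr rfl fun g _ => ?_
      simp only [conjL_apply]
      rw [← LinearMap.comp_assoc, ← Module.End.mul_eq_comp, hrep' h g,
        LinearMap.smul_comp]
    have e2 : Φ L ∘ₗ V h
        = ∑ g : G, (ω h g : ℂ) • (conjL (V' (h*g)) (↑(hVinv g).unit⁻¹) L) := by
      rw [hΦ, LinearMap.sum_apply, compSumR]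
      rw [← Equiv.sum_comp (Equiv.mulLeft h)
        (fun g => conjL (V' g) (↑(hVinv g).unit⁻¹) L ∘ₗ V h)]
      refine Finset.sum_congr rfl fun g _ => ?_
      simp only [conjL_apply, Equiv.coe_mulLeft]
      rw [LinearMap.comp_assoc, LinearMap.comp_assoc,
        ← Module.End.mul_eq_comp (↑(hVinv (h*g)).unit⁻¹ : W →ₗ[ℂ] W) (V h), hkey h g]
      simp only [LinearMap.comp_smul]
    rw [e1, e2]
  -- trace of Φ is nonzero
  have htrΦ : LinearMap.trace ℂ _ Φ = (finrank ℂ W' : ℂ) * (finrank ℂ W : ℂ) := by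
    rw [hΦ, map_sum]
    rw [Finset.sum_eq_single 1]
    · rw [trace_conjL, htrV'1, htrinv1]
      field_simp
    · intro g _ hg
      rw [trace_conjL, htr0 g hg, zero_mul]
    · intro h1; exact absurd (Finset.mem_univ 1) h1
  have hn : (finrank ℂ W' : ℂ) * (finrank ℂ W : ℂ) ≠ 0 := by
    have h1 : (0:ℕ) < finrank ℂ W := finrank_pos
    have h2 : (0:ℕ) < finrank ℂ W' := finrank_pos
    exact mul_ne_zero (Nat.cast_ne_zero.mpr h2.ne') (Nat.cast_ne_zero.mpr h1.ne')
  obtain ⟨L, hL⟩ : ∃ L : W →ₗ[ℂ] W', Φ L ≠ 0 := by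
    by_contra hc
    push_neg at hc
    have : Φ = 0 := LinearMap.ext fun L => by rw [hc L]; rfl
    rw [this, map_zero] at htrΦ
    exact hn htrΦ.symm
  set S₀ : W →ₗ[ℂ] W' := Φ L with hS₀
  -- Schur: S₀ is bijective
  have hker : LinearMap.ker S₀ = ⊥ := by
    have hstab : ∀ g : G, (LinearMap.ker S₀).map (V g) ≤ LinearMap.ker S₀ := by
      intro g
      rintro y ⟨x, hx, rfl⟩
      have h2 := congrArg (fun f => f x) (hint L g)
      simp only [LinearMap.coe_comp, Function.comp_apply] at h2
      rw [LinearMap.mem_ker]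
      rw [← h2, show S₀ x = 0 from hx, map_zero]
    rcases hirr (LinearMap.ker S₀) hstab with h | h
    · exact h
    · exfalso
      apply hL
      ext x
      have hx : x ∈ LinearMap.ker S₀ := h ▸ Submodule.mem_top
      simpa using hx
  have hrange : LinearMap.range S₀ = ⊤ := by
    have hstab : ∀ g : G, (LinearMap.range S₀).map (V' g) ≤ LinearMap.range S₀ := by
      intro g
      rintro y ⟨z, ⟨x, rfl⟩, rfl⟩
      have h2 := congrArg (fun f => f x) (hint L g)
      simp only [LinearMap.coe_comp, Function.comp_apply] at h2
      exact ⟨V g x, h2.symm⟩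
    rcases hirr' (LinearMap.range S₀) hstab with h | h
    · exfalso
      apply hL
      ext x
      have hx : S₀ x ∈ LinearMap.range S₀ := LinearMap.mem_range_self _ x
      rw [h] at hx
      simpa using hx
    · exact h
  have hbij : Function.Bijective S₀ :=
    ⟨LinearMap.ker_eq_bot.mp hker, LinearMap.range_eq_top.mp hrange⟩
  refine ⟨LinearEquiv.ofBijective S₀ hbij, fun g => ?_⟩
  ext w'
  simp only [LinearMap.coe_comp, Function.comp_apply, LinearEquiv.coe_coe,
    LinearEquiv.ofBijective_apply]
  set x := (LinearEquiv.ofBijective S₀ hbij).symm w' with hx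
  have hxw : S₀ x = w' := by
    have h3 := (LinearEquiv.ofBijective S₀ hbij).apply_symm_apply w'
    rw [LinearEquiv.ofBijective_apply] at h3
    exact h3
  have h2 := congrArg (fun f => f x) (hint L g)
  simp only [LinearMap.coe_comp, Function.comp_apply] at h2
  rw [← hxw]
  exact h2
end

section
/- Let V be a projective representation of a group G on a finite-dimensional complex vector space, of the form V(g) = Ṽ(g) ⊗ I where Ṽ is an irreducible projective representation with factor system ω. Let A be a linear operator and χ a linear character of G such that V(g)† A V(g) = χ(g) A for all g, with V(g) unitary. Suppose h_χ ∈ G satisfies V(h_χ)V(g) = χ(g)V(g)V(h_χ) for all g. Then A = Ṽ(h_χ) ⊗ A_junk for some operator A_junk on the second tensor factor. -/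
open Matrix Kronecker

-- Schur: commutant is scalar
lemma schur_aux {G : Type*} [Group G] {n : ℕ}
    (Vt : G → Matrix (Fin n) (Fin n) ℂ)
    (hirr : ∀ p : Submodule ℂ (Fin n → ℂ),
      (∀ g : G, ∀ v ∈ p, (Vt g).mulVec v ∈ p) → p = ⊥ ∨ p = ⊤)
    (B : Matrix (Fin n) (Fin n) ℂ)
    (hB : ∀ g : G, Vt g * B = B * Vt g) :
    ∃ c : ℂ, B = c • 1 := by
  rcases Nat.eq_zero_or_pos n with h0 | hn
  · exact ⟨0, by subst h0; ext i; exact i.elim0⟩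
  have : Nontrivial (Fin n → ℂ) := by
    haveI : NeZero n := ⟨hn.ne'⟩
    infer_instance
  obtain ⟨c, hc⟩ := Module.End.exists_eigenvalue (B.mulVecLin)
  refine ⟨c, ?_⟩
  have hne : Module.End.eigenspace B.mulVecLin c ≠ ⊥ := hc
  have hinv : ∀ g : G, ∀ v ∈ Module.End.eigenspace B.mulVecLin c,
      (Vt g).mulVec v ∈ Module.End.eigenspace B.mulVecLin c := by
    intro g v hv
    rw [Module.End.mem_eigenspace_iff] at hv ⊢
    have : B.mulVec ((Vt g).mulVec v) = c • (Vt g).mulVec v := by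
      simp only [Matrix.mulVecLin_apply] at hv
      rw [Matrix.mulVec_mulVec, ← hB g, ← Matrix.mulVec_mulVec, hv, Matrix.mulVec_smul]
    simpa [Matrix.mulVecLin_apply] using this
  have htop := (hirr _ hinv).resolve_left hne
  have hall : ∀ v : Fin n → ℂ, B.mulVec v = c • v := by
    intro v
    have hv : v ∈ Module.End.eigenspace B.mulVecLin c := htop ▸ Submodule.mem_top
    rw [Module.End.mem_eigenspace_iff] at hv
    simpa [Matrix.mulVecLin_apply] using hv
  ext i j
  have := congrFun (hall (Pi.single j 1)) i
  simpa [Matrix.mulVec_single, Matrix.smul_apply, Pi.single_apply, Matrix.one_apply, mul_ite, mul_one, mul_zero] using this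

lemma kron_one_conjTranspose {n m : ℕ} (X : Matrix (Fin n) (Fin n) ℂ) :
    (X ⊗ₖ (1 : Matrix (Fin m) (Fin m) ℂ))ᴴ = Xᴴ ⊗ₖ (1 : Matrix (Fin m) (Fin m) ℂ) := by
  ext ⟨i, j⟩ ⟨i', k⟩
  by_cases h : j = k <;>
    simp [Matrix.conjTranspose_apply, Matrix.kroneckerMap_apply, Matrix.one_apply, h, eq_comm]

/-- Let V(g) = Ṽ(g) ⊗ I with Ṽ an irreducible unitary projective
representation with factor system ω, let A satisfy V(g)† A V(g) = χ(g) A for all g,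
and let h_χ satisfy V(h_χ)V(g) = χ(g)V(g)V(h_χ). Then A = Ṽ(h_χ) ⊗ A_junk. -/
theorem stmt_10 {G : Type*} [Group G] {n m : ℕ}
    (ω : G → G → ℂˣ)
    (Vt : G → Matrix (Fin n) (Fin n) ℂ)
    (hunit : ∀ g : G, Vt g ∈ Matrix.unitaryGroup (Fin n) ℂ)
    (hrep : ∀ g h : G, Vt g * Vt h = (ω g h : ℂ) • Vt (g * h))
    (hirr : ∀ p : Submodule ℂ (Fin n → ℂ),
      (∀ g : G, ∀ v ∈ p, (Vt g).mulVec v ∈ p) → p = ⊥ ∨ p = ⊤)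
    (χ : G →* ℂˣ)
    (A : Matrix (Fin n × Fin m) (Fin n × Fin m) ℂ)
    (hA : ∀ g : G,
      (Vt g ⊗ₖ (1 : Matrix (Fin m) (Fin m) ℂ))ᴴ * A * (Vt g ⊗ₖ (1 : Matrix (Fin m) (Fin m) ℂ))
        = (χ g : ℂ) • A)
    (hχ : G)
    (hhχ : ∀ g : G, Vt hχ * Vt g = (χ g : ℂ) • (Vt g * Vt hχ)) :
    ∃ Ajunk : Matrix (Fin m) (Fin m) ℂ, A = Vt hχ ⊗ₖ Ajunk := by
  -- unitarity facts
  have hu1 : ∀ g : G, (Vt g)ᴴ * Vt g = 1 := fun g => (Matrix.mem_unitaryGroup_iff'.mp (hunit g))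
  have hu2 : ∀ g : G, Vt g * (Vt g)ᴴ = 1 := fun g => (Matrix.mem_unitaryGroup_iff.mp (hunit g))
  -- A * (Vt g ⊗ 1) = χ g • (Vt g ⊗ 1) * A
  have hA' : ∀ g : G, A * (Vt g ⊗ₖ (1 : Matrix (Fin m) (Fin m) ℂ))
      = (χ g : ℂ) • ((Vt g ⊗ₖ (1 : Matrix (Fin m) (Fin m) ℂ)) * A) := by
    intro g
    have hk : (Vt g ⊗ₖ (1 : Matrix (Fin m) (Fin m) ℂ)) *
        (Vt g ⊗ₖ (1 : Matrix (Fin m) (Fin m) ℂ))ᴴ = 1 := by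
      rw [kron_one_conjTranspose, ← Matrix.mul_kronecker_mul, hu2 g]
      simp
    calc A * (Vt g ⊗ₖ (1 : Matrix (Fin m) (Fin m) ℂ))
        = (Vt g ⊗ₖ (1 : Matrix (Fin m) (Fin m) ℂ)) *
          ((Vt g ⊗ₖ (1 : Matrix (Fin m) (Fin m) ℂ))ᴴ * A *
            (Vt g ⊗ₖ (1 : Matrix (Fin m) (Fin m) ℂ))) := by
          rw [← Matrix.mul_assoc, ← Matrix.mul_assoc, hk, Matrix.one_mul]
      _ = (χ g : ℂ) • ((Vt g ⊗ₖ (1 : Matrix (Fin m) (Fin m) ℂ)) * A) := by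
          rw [hA g, Matrix.mul_smul]
  -- the twisted operator commutes with the representation
  set A' : Matrix (Fin n × Fin m) (Fin n × Fin m) ℂ :=
    ((Vt hχ)ᴴ ⊗ₖ (1 : Matrix (Fin m) (Fin m) ℂ)) * A with hA'def
  have hcomm' : ∀ g : G, Vt g * (Vt hχ)ᴴ = (χ g : ℂ) • ((Vt hχ)ᴴ * Vt g) := by
    intro g
    have h1 := hhχ g
    calc Vt g * (Vt hχ)ᴴ
        = (Vt hχ)ᴴ * (Vt hχ * Vt g) * (Vt hχ)ᴴ := by
          rw [← Matrix.mul_assoc, hu1 hχ, Matrix.one_mul]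
      _ = (χ g : ℂ) • ((Vt hχ)ᴴ * Vt g) := by
          rw [h1, Matrix.mul_smul, Matrix.smul_mul, Matrix.mul_assoc, Matrix.mul_assoc,
            hu2 hχ, Matrix.mul_one]
  have hcomm : ∀ g : G, (Vt g ⊗ₖ (1 : Matrix (Fin m) (Fin m) ℂ)) * A'
      = A' * (Vt g ⊗ₖ (1 : Matrix (Fin m) (Fin m) ℂ)) := by
    intro g
    rw [hA'def, Matrix.mul_assoc, hA' g, Matrix.mul_smul, ← Matrix.mul_assoc,
      ← Matrix.mul_assoc, ← Matrix.mul_kronecker_mul, ← Matrix.mul_kronecker_mul,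
      ← Matrix.smul_mul, ← Matrix.smul_kronecker, ← hcomm' g]
  -- block decomposition: each block commutes with Vt g, hence is scalar
  have hblocks : ∀ j k : Fin m, ∃ c : ℂ,
      (Matrix.of (fun i i' => A' (i, j) (i', k)) : Matrix (Fin n) (Fin n) ℂ) = c • 1 := by
    intro j k
    apply schur_aux Vt hirr
    intro g
    ext i i'
    have := congrFun (congrFun (hcomm g) (i, j)) (i', k)
    simp only [Matrix.mul_apply, Matrix.kroneckerMap_apply, Fintype.sum_prod_type] at this
    simp only [Matrix.mul_apply, Matrix.of_apply]
    convert this using 1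
    · refine Finset.sum_congr rfl fun p _ => ?_
      simp [Matrix.one_apply, Finset.sum_ite_eq', Finset.mul_sum]
    · refine (Finset.sum_congr rfl fun p _ => ?_).symm
      simp [Matrix.one_apply, Finset.sum_ite_eq, Finset.sum_mul, mul_comm, mul_left_comm]
  choose c hc using hblocks
  -- A' = 1 ⊗ C
  have hA'eq : A' = (1 : Matrix (Fin n) (Fin n) ℂ) ⊗ₖ (Matrix.of c) := by
    ext ⟨i, j⟩ ⟨i', k⟩
    have := congrFun (congrFun (hc j k) i) i'
    simp only [Matrix.of_apply, Matrix.smul_apply, smul_eq_mul] at this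
    simp [Matrix.kroneckerMap_apply, this, Matrix.one_apply, mul_comm]
  refine ⟨Matrix.of c, ?_⟩
  have : (Vt hχ ⊗ₖ (1 : Matrix (Fin m) (Fin m) ℂ)) * A' = A := by
    rw [hA'def, ← Matrix.mul_assoc, ← Matrix.mul_kronecker_mul, hu2 hχ]
    simp
  rw [← this, hA'eq, ← Matrix.mul_kronecker_mul]
  simp
end

section
/- Let G be a finite abelian group with a maximally non-commutative factor system ω, V a unitary projective representation of G with factor system ω that decomposes as V(g) = Ṽ(g) ⊗ I with Ṽ irreducible, and let {A[i]} be operators satisfying V(g)† A[i] V(g) = χ_i(g) A[i] for linear characters χ_i of G. Then A[i] = Ṽ(h_{χ_i}) ⊗ A_junk[i] for some operators A_junk[i], where h_{χ_i} = φ^{-1}(χ_i) with [φ(h)](g) = ω(h,g)ω(g,h)^{-1}. -/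
open Matrix Kronecker

/-- Schur's lemma: a matrix commuting with all operators of an irreducible family
is a scalar multiple of the identity. -/
lemma schur_scalar {G : Type*} {n : ℕ} (Vt : G → Matrix (Fin n) (Fin n) ℂ)
    (hirr : ∀ p : Submodule ℂ (Fin n → ℂ),
      (∀ g : G, ∀ v ∈ p, (Vt g).mulVec v ∈ p) → p = ⊥ ∨ p = ⊤)
    (C : Matrix (Fin n) (Fin n) ℂ)
    (hcomm : ∀ g : G, Vt g * C = C * Vt g) :
    ∃ c : ℂ, C = c • (1 : Matrix (Fin n) (Fin n) ℂ) := by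
  rcases Nat.eq_zero_or_pos n with hn | hn
  · exact ⟨0, by subst hn; ext a b; exact a.elim0⟩
  · haveI : NeZero n := ⟨hn.ne'⟩
    obtain ⟨c, hc⟩ := Module.End.exists_eigenvalue (Matrix.mulVecLin C)
    obtain ⟨v, hv⟩ := hc.exists_hasEigenvector
    set p : Submodule ℂ (Fin n → ℂ) := LinearMap.ker (Matrix.mulVecLin (C - c • 1)) with hp
    have hcg : ∀ g : G, (C - c • 1) * Vt g = Vt g * (C - c • 1) := by
      intro g
      rw [Matrix.sub_mul, Matrix.mul_sub, ← hcomm g, Matrix.smul_mul, Matrix.mul_smul,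
        Matrix.one_mul, Matrix.mul_one]
    have hinv : ∀ g : G, ∀ w ∈ p, (Vt g).mulVec w ∈ p := by
      intro g w hw
      simp only [hp, LinearMap.mem_ker, Matrix.mulVecLin_apply] at hw ⊢
      rw [Matrix.mulVec_mulVec, hcg g, ← Matrix.mulVec_mulVec, hw, Matrix.mulVec_zero]
    have hne : p ≠ ⊥ := by
      intro hbot
      have hvmem : v ∈ p := by
        simp only [hp, LinearMap.mem_ker, Matrix.mulVecLin_apply]
        have hev : C.mulVec v = c • v := hv.apply_eq_smul
        rw [Matrix.sub_mulVec, hev, Matrix.smul_mulVec, Matrix.one_mulVec, sub_self]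
      rw [hbot, Submodule.mem_bot] at hvmem
      exact hv.2 hvmem
    have htop := (hirr p hinv).resolve_left hne
    refine ⟨c, sub_eq_zero.mp ?_⟩
    have hall : ∀ w, (C - c • 1).mulVec w = 0 := by
      intro w
      have hw : w ∈ p := htop ▸ Submodule.mem_top
      simpa only [hp, LinearMap.mem_ker, Matrix.mulVecLin_apply] using hw
    ext a b
    have h1 := congrFun (hall (Pi.single b 1)) a
    rw [Matrix.mulVec_single] at h1
    simpa using h1

/-- Main theorem: Let G be finite abelian with maximally
non-commutative factor system ω, let V(g) = Ṽ(g) ⊗ I with Ṽ an irreducible unitary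
ω-projective representation, and let the operators A[i] satisfy
V(g)† A[i] V(g) = χ_i(g) A[i] for linear characters χ_i. Then
A[i] = Ṽ(h_{χ_i}) ⊗ A_junk[i], where h_{χ_i} = φ⁻¹(χ_i) with
[φ(h)](g) = ω(h,g)ω(g,h)⁻¹. -/
theorem stmt_12 {G : Type*} [CommGroup G] [Fintype G] {n m : ℕ} {ι : Type*}
    (ω : G → G → ℂˣ)
    (hcoc : ∀ g h k : G, ω g h * ω (g * h) k = ω h k * ω g (h * k))
    (hmax : ∀ g : G, (∀ h : G, ω g h = ω h g) → g = 1)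
    (Vt : G → Matrix (Fin n) (Fin n) ℂ)
    (hunit : ∀ g : G, Vt g ∈ Matrix.unitaryGroup (Fin n) ℂ)
    (hrep : ∀ g h : G, Vt g * Vt h = (ω g h : ℂ) • Vt (g * h))
    (hirr : ∀ p : Submodule ℂ (Fin n → ℂ),
      (∀ g : G, ∀ v ∈ p, (Vt g).mulVec v ∈ p) → p = ⊥ ∨ p = ⊤)
    (χ : ι → (G →* ℂˣ))
    (A : ι → Matrix (Fin n × Fin m) (Fin n × Fin m) ℂ)
    (hA : ∀ (i : ι) (g : G),
      (Vt g ⊗ₖ (1 : Matrix (Fin m) (Fin m) ℂ))ᴴ * A i * (Vt g ⊗ₖ (1 : Matrix (Fin m) (Fin m) ℂ))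
        = (χ i g : ℂ) • A i) :
    ∀ i : ι, ∃ hχ : G,
      (∀ g : G, χ i g = ω hχ g * (ω g hχ)⁻¹) ∧
      ∃ Ajunk : Matrix (Fin m) (Fin m) ℂ, A i = Vt hχ ⊗ₖ Ajunk := by
  classical
  -- the antisymmetrized bicharacter β
  set β : G → G → ℂˣ := fun h g => ω h g * (ω g h)⁻¹ with hβ
  -- ω(g,1) = ω(1,1) = ω(1,g)
  have hω_one_right : ∀ g : G, ω g 1 = ω 1 1 := by
    intro g
    have h := hcoc g 1 1
    simp only [mul_one] at h
    exact mul_right_cancel h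
  have hω_one_left : ∀ g : G, ω 1 g = ω 1 1 := by
    intro g
    have h := hcoc 1 1 g
    simp only [one_mul] at h
    exact (mul_right_cancel h).symm
  -- the key cocycle computation, in ℂ
  have key : ∀ h g k : G,
      (ω h (g * k) : ℂ) * ((ω g h : ℂ) * (ω k h : ℂ))
        = ((ω h g : ℂ) * (ω h k : ℂ)) * (ω (g * k) h : ℂ) := by
    intro h g k
    have h1 := congrArg (Units.val) (hcoc h g k)
    have h2 := congrArg (Units.val) (hcoc g k h)
    have h3 := congrArg (Units.val) (hcoc g h k)
    rw [mul_comm h g] at h1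
    rw [mul_comm k h] at h2
    push_cast at h1 h2 h3
    have hcb : ((ω g k : ℂ) * (ω (g * h) k : ℂ)) ≠ 0 :=
      mul_ne_zero (Units.ne_zero _) (Units.ne_zero _)
    apply mul_left_cancel₀ hcb
    -- abbreviations: a = ωhg, b = ω(gh)k, c = ωgk, d = ωh(gk), e = ω(gk)h,
    -- f = ωkh, p = ωg(hk), q = ωgh, r = ωhk
    -- h1 : a*b = c*d ; h2 : c*e = f*p ; h3 : q*b = r*p
    -- goal : c*b*(d*(q*f)) = c*b*((a*r)*e)
    linear_combination (-( (ω g h : ℂ) * (ω k h : ℂ) * (ω (g * h) k : ℂ))) * h1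
      - (ω h g : ℂ) * (ω (g * h) k : ℂ) * (ω h k : ℂ) * h2
      + (ω h g : ℂ) * (ω (g * h) k : ℂ) * (ω k h : ℂ) * h3
  -- β is multiplicative in its second argument
  have hβ2 : ∀ h g k : G, β h (g * k) = β h g * β h k := by
    intro h g k
    have hk := key h g k
    rw [Units.ext_iff]
    push_cast [hβ]
    field_simp
    linear_combination hk
  have hβsymm : ∀ h g : G, β h g = (β g h)⁻¹ := by
    intro h g
    simp only [hβ]
    group
  have hβ1 : ∀ h k g : G, β (h * k) g = β h g * β k g := by
    intro h k g
    rw [hβsymm (h * k) g, hβ2 g h k, _root_.mul_inv_rev, ← hβsymm h g, ← hβsymm k g, mul_comm]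
  have hβone2 : ∀ h : G, β h 1 = 1 := by
    intro h
    simp only [hβ, hω_one_right, hω_one_left, mul_inv_cancel]
  have hβone1 : ∀ g : G, β 1 g = 1 := by
    intro g
    simp only [hβ, hω_one_right, hω_one_left, mul_inv_cancel]
  -- the homomorphism Φ : G →* (G →* ℂˣ)
  let Φ : G →* (G →* ℂˣ) :=
    { toFun := fun h =>
        { toFun := fun g => β h g
          map_one' := hβone2 h
          map_mul' := fun g k => hβ2 h g k }
      map_one' := by ext g; simpa using congrArg Units.val (hβone1 g)
      map_mul' := fun h k => by ext g; simpa using congrArg Units.val (hβ1 h k g) }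
  have hΦapp : ∀ h g : G, Φ h g = β h g := fun _ _ => rfl
  have hinj : Function.Injective Φ := by
    intro a b hab
    have h1 : Φ (a * b⁻¹) = 1 := by
      rw [_root_.map_mul, hab, map_inv, mul_inv_cancel]
    have h2 : ∀ g : G, ω (a * b⁻¹) g = ω g (a * b⁻¹) := by
      intro g
      have := congrArg (fun f : G →* ℂˣ => f g) h1
      simp only [hΦapp, MonoidHom.one_apply, hβ] at this
      exact mul_inv_eq_one.mp this
    have := hmax _ h2
    rwa [mul_inv_eq_one] at this
  -- surjectivity of Φ by counting
  obtain ⟨e⟩ := CommGroup.monoidHom_mulEquiv_of_hasEnoughRootsOfUnity G ℂ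
  haveI : Fintype (G →* ℂˣ) := Fintype.ofEquiv G e.symm.toEquiv
  have hcard : Fintype.card G = Fintype.card (G →* ℂˣ) := (Fintype.card_congr e.toEquiv).symm
  have hsurj : Function.Surjective Φ :=
    ((Fintype.bijective_iff_injective_and_card Φ).mpr ⟨hinj, hcard⟩).2
  -- basic Kronecker facts
  have hKmul : ∀ X Y : Matrix (Fin n) (Fin n) ℂ,
      (X ⊗ₖ (1 : Matrix (Fin m) (Fin m) ℂ)) * (Y ⊗ₖ (1 : Matrix (Fin m) (Fin m) ℂ))
        = (X * Y) ⊗ₖ (1 : Matrix (Fin m) (Fin m) ℂ) := by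
    intro X Y
    rw [← Matrix.mul_kronecker_mul, Matrix.one_mul]
  have hKH : ∀ X : Matrix (Fin n) (Fin n) ℂ,
      (X ⊗ₖ (1 : Matrix (Fin m) (Fin m) ℂ))ᴴ = Xᴴ ⊗ₖ (1 : Matrix (Fin m) (Fin m) ℂ) := by
    intro X
    ext ⟨a, b⟩ ⟨c, d⟩
    simp [Matrix.conjTranspose_apply, Matrix.kroneckerMap_apply, Matrix.one_apply,
      apply_ite (star : ℂ → ℂ), eq_comm]
  -- unitarity
  have huH : ∀ g : G, (Vt g)ᴴ * Vt g = 1 := by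
    intro g
    have := (hunit g).1
    rwa [Matrix.star_eq_conjTranspose] at this
  have huH' : ∀ g : G, Vt g * (Vt g)ᴴ = 1 := by
    intro g
    have := (hunit g).2
    rwa [Matrix.star_eq_conjTranspose] at this
  intro i
  obtain ⟨h, hh⟩ := hsurj (χ i)
  have hχval : ∀ g : G, χ i g = ω h g * (ω g h)⁻¹ := by
    intro g
    rw [← hh]; rfl
  refine ⟨h, hχval, ?_⟩
  -- commutation relation for Ṽ(h)
  have hcomm1 : ∀ g : G, Vt h * Vt g = (χ i g : ℂ) • (Vt g * Vt h) := by
    intro g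
    rw [hrep h g, hrep g h, mul_comm g h, smul_smul]
    congr 1
    have : (χ i g : ℂ) = (ω h g : ℂ) * ((ω g h)⁻¹ : ℂˣ) := by
      rw [hχval g]; push_cast; ring
    rw [this, mul_assoc]
    have : (((ω g h)⁻¹ : ℂˣ) : ℂ) * (ω g h : ℂ) = 1 := by
      rw [← Units.val_mul, inv_mul_cancel, Units.val_one]
    rw [this, mul_one]
  have hVhg : ∀ g : G, Vt g * (Vt h)ᴴ = (χ i g : ℂ) • ((Vt h)ᴴ * Vt g) := by
    intro g
    have h1 : (Vt h)ᴴ * (Vt h * Vt g) * (Vt h)ᴴ = Vt g * (Vt h)ᴴ := by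
      rw [← Matrix.mul_assoc, huH h, Matrix.one_mul]
    have h2 : (Vt h)ᴴ * ((χ i g : ℂ) • (Vt g * Vt h)) * (Vt h)ᴴ
        = (χ i g : ℂ) • ((Vt h)ᴴ * Vt g) := by
      rw [Matrix.mul_smul, Matrix.smul_mul]
      congr 1
      rw [Matrix.mul_assoc, Matrix.mul_assoc, huH' h, Matrix.mul_one]
    rw [← h1, hcomm1 g, h2]
  -- B commutes with all Vt g ⊗ 1
  set B : Matrix (Fin n × Fin m) (Fin n × Fin m) ℂ :=
    ((Vt h)ᴴ ⊗ₖ (1 : Matrix (Fin m) (Fin m) ℂ)) * A i with hB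
  have hAg : ∀ g : G,
      A i * (Vt g ⊗ₖ (1 : Matrix (Fin m) (Fin m) ℂ))
        = (χ i g : ℂ) • ((Vt g ⊗ₖ (1 : Matrix (Fin m) (Fin m) ℂ)) * A i) := by
    intro g
    have h1 := hA i g
    have h2 := congrArg (fun X => (Vt g ⊗ₖ (1 : Matrix (Fin m) (Fin m) ℂ)) * X) h1
    simp only at h2
    rw [← Matrix.mul_assoc, ← Matrix.mul_assoc, hKH, hKmul, huH' g, Matrix.one_kronecker_one,
      Matrix.one_mul, Matrix.mul_smul] at h2
    exact h2
  have hBcomm : ∀ g : G,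
      (Vt g ⊗ₖ (1 : Matrix (Fin m) (Fin m) ℂ)) * B = B * (Vt g ⊗ₖ (1 : Matrix (Fin m) (Fin m) ℂ)) := by
    intro g
    rw [hB, ← Matrix.mul_assoc, hKmul, Matrix.mul_assoc, hAg g, Matrix.mul_smul,
      ← Matrix.mul_assoc, hKmul, hVhg g, Matrix.smul_kronecker, Matrix.smul_mul]
  -- Schur's lemma applied blockwise
  have hblock : ∀ b d : Fin m, ∃ c : ℂ,
      (Matrix.of fun a c' => B (a, b) (c', d)) = c • (1 : Matrix (Fin n) (Fin n) ℂ) := by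
    intro b d
    apply schur_scalar Vt hirr
    intro g
    ext a c'
    have h1 := congrFun (congrFun (hBcomm g) (a, b)) (c', d)
    simp only [Matrix.mul_apply, Matrix.kroneckerMap_apply, Matrix.one_apply,
      Fintype.sum_prod_type, mul_ite, ite_mul, mul_one, mul_zero, one_mul, zero_mul,
      Finset.sum_ite_eq, Finset.sum_ite_eq', Finset.mem_univ, if_true, Matrix.of_apply] at h1 ⊢
    convert h1 using 1
  choose lam hlam using hblock
  set M : Matrix (Fin m) (Fin m) ℂ := Matrix.of lam with hM
  have hB1 : B = (1 : Matrix (Fin n) (Fin n) ℂ) ⊗ₖ M := by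
    ext ⟨a, b⟩ ⟨c, d⟩
    have := congrFun (congrFun (hlam b d) a) c
    simp only [Matrix.of_apply, Matrix.smul_apply, Matrix.one_apply, smul_eq_mul] at this
    simp only [Matrix.kroneckerMap_apply, hM, Matrix.of_apply, Matrix.one_apply, this]
    split <;> ring
  refine ⟨M, ?_⟩
  calc A i = ((Vt h * (Vt h)ᴴ) ⊗ₖ (1 : Matrix (Fin m) (Fin m) ℂ)) * A i := by
        rw [huH' h, Matrix.one_kronecker_one, Matrix.one_mul]
    _ = (Vt h ⊗ₖ (1 : Matrix (Fin m) (Fin m) ℂ)) * B := by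
        rw [hB, ← Matrix.mul_assoc, hKmul]
    _ = (Vt h ⊗ₖ (1 : Matrix (Fin m) (Fin m) ℂ)) * ((1 : Matrix (Fin n) (Fin n) ℂ) ⊗ₖ M) := by
        rw [hB1]
    _ = Vt h ⊗ₖ M := by
        rw [← Matrix.mul_kronecker_mul, Matrix.mul_one, Matrix.one_mul]
end

section
/- Let A[α] (α ∈ {x,y,z}) be 2m × 2m complex matrices (viewed as operators on ℂ² ⊗ ℂ^m) satisfying (σ_g ⊗ I)† A[α] (σ_g ⊗ I) = χ_α(g) A[α] for all g ∈ Z₂ × Z₂, where σ_1 = I and σ_x, σ_y, σ_z are Pauli matrices, and χ_α are the characters with χ_α(α) = 1, χ_α(β) = -1 for β ≠ α nontrivial. Then A[α] = σ_α ⊗ M_α for some m × m matrices M_α. -/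
open Matrix Kronecker

/-- The Pauli assignment for Z₂ × Z₂ = {1, x, y, z}. -/
noncomputable def pauliRep : ZMod 2 × ZMod 2 → Matrix (Fin 2) (Fin 2) ℂ := fun p =>
  if p = (0, 0) then 1
  else if p = (1, 0) then !![0, 1; 1, 0]
  else if p = (0, 1) then !![0, -Complex.I; Complex.I, 0]
  else !![1, 0; 0, -1]

/-- The character χ_α of Z₂ × Z₂: χ_α(1) = χ_α(α) = 1, χ_α(β) = -1 otherwise. -/
def pauliChar : ZMod 2 × ZMod 2 → ZMod 2 × ZMod 2 → ℂ := fun α g =>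
  if g = 0 ∨ α = 0 ∨ g = α then 1 else -1

lemma conj_entry {m : ℕ} (B : Matrix (Fin 2) (Fin 2) ℂ)
    (A : Matrix (Fin 2 × Fin m) (Fin 2 × Fin m) ℂ) (i j : Fin 2) (a b : Fin m) :
    ((B ⊗ₖ (1 : Matrix (Fin m) (Fin m) ℂ))ᴴ * A * (B ⊗ₖ (1 : Matrix (Fin m) (Fin m) ℂ))) (i, a) (j, b)
      = ∑ k, ∑ l, star (B k i) * A (k, a) (l, b) * B l j := by
  simp [mul_apply, conjTranspose_apply, kroneckerMap_apply, Matrix.one_apply,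
    Fintype.sum_prod_type, Finset.mul_sum, Finset.sum_mul, mul_ite, ite_mul,
    apply_ite (starRingEnd ℂ), Finset.sum_ite_eq, Finset.sum_ite_eq',
    mul_comm, mul_left_comm]
  ring

lemma repx : pauliRep (1,0) = !![0, 1; 1, 0] := rfl
lemma repy : pauliRep (0,1) = !![0, -Complex.I; Complex.I, 0] := rfl
lemma repz : pauliRep (1,1) = !![1, 0; 0, -1] := rfl
lemma rep1 : pauliRep 1 = !![1, 0; 0, -1] := rfl

lemma charxz : pauliChar (1,0) (1,1) = -1 := rfl
lemma charxx : pauliChar (1,0) (1,0) = 1 := rfl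
lemma charyz : pauliChar (0,1) (1,1) = -1 := rfl
lemma charyx : pauliChar (0,1) (1,0) = -1 := rfl
lemma charzz : pauliChar (1,1) (1,1) = 1 := rfl
lemma charzx : pauliChar (1,1) (1,0) = -1 := rfl

/-- If the 2m × 2m matrices A[α] (α nontrivial in Z₂ × Z₂), viewed as
operators on ℂ² ⊗ ℂᵐ, satisfy (σ_g ⊗ I)† A[α] (σ_g ⊗ I) = χ_α(g) A[α] for all
g ∈ Z₂ × Z₂, then A[α] = σ_α ⊗ M_α for some m × m matrices M_α. -/
theorem stmt_15 {m : ℕ}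
    (A : ZMod 2 × ZMod 2 → Matrix (Fin 2 × Fin m) (Fin 2 × Fin m) ℂ)
    (hA : ∀ α : ZMod 2 × ZMod 2, α ≠ 0 → ∀ g : ZMod 2 × ZMod 2,
      (pauliRep g ⊗ₖ (1 : Matrix (Fin m) (Fin m) ℂ))ᴴ * A α *
        (pauliRep g ⊗ₖ (1 : Matrix (Fin m) (Fin m) ℂ)) = pauliChar α g • A α) :
    ∀ α : ZMod 2 × ZMod 2, α ≠ 0 →
      ∃ M : Matrix (Fin m) (Fin m) ℂ, A α = pauliRep α ⊗ₖ M := by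
  intro α hα
  have key : ∀ g (i j : Fin 2) (a b : Fin m),
      ∑ k, ∑ l, star (pauliRep g k i) * A α (k, a) (l, b) * pauliRep g l j
        = pauliChar α g * A α (i, a) (j, b) := by
    intro g i j a b
    have h := congrFun (congrFun (hA α hα g) (i, a)) (j, b)
    rw [conj_entry] at h
    simpa using h
  have h0 : ∀ x : ZMod 2 × ZMod 2, x = (0,0) ∨ x = (1,0) ∨ x = (0,1) ∨ x = (1,1) := by decide
  rcases h0 α with h | h | h | h
  · exact absurd h hα
  · -- α = x
    subst h
    have e00 : ∀ a b, A (1,0) (0, a) (0, b) = 0 := by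
      intro a b
      have h := key (1,1) 0 0 a b
      rw [repz, charxz] at h
      simp [Fin.sum_univ_two] at h
      linear_combination h / 2
    have e11 : ∀ a b, A (1,0) (1, a) (1, b) = 0 := by
      intro a b
      have h := key (1,1) 1 1 a b
      rw [repz, charxz] at h
      simp [Fin.sum_univ_two] at h
      linear_combination h / 2
    have e10 : ∀ a b, A (1,0) (1, a) (0, b) = A (1,0) (0, a) (1, b) := by
      intro a b
      have h := key (1,0) 0 1 a b
      rw [repx, charxx] at h
      simp [Fin.sum_univ_two] at h
      linear_combination h
    refine ⟨Matrix.of fun a b => A (1,0) (0, a) (1, b), ?_⟩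
    ext ⟨i, a⟩ ⟨j, b⟩
    fin_cases i <;> fin_cases j <;> simp [repx, kroneckerMap_apply, e00, e11, e10]
  · -- α = y
    subst h
    have e00 : ∀ a b, A (0,1) (0, a) (0, b) = 0 := by
      intro a b
      have h := key (1,1) 0 0 a b
      rw [repz, charyz] at h
      simp [Fin.sum_univ_two] at h
      linear_combination h / 2
    have e11 : ∀ a b, A (0,1) (1, a) (1, b) = 0 := by
      intro a b
      have h := key (1,1) 1 1 a b
      rw [repz, charyz] at h
      simp [Fin.sum_univ_two] at h
      linear_combination h / 2
    have e10 : ∀ a b, A (0,1) (1, a) (0, b) = -A (0,1) (0, a) (1, b) := by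
      intro a b
      have h := key (1,0) 0 1 a b
      rw [repx, charyx] at h
      simp [Fin.sum_univ_two] at h
      linear_combination h
    refine ⟨Matrix.of fun a b => Complex.I * A (0,1) (0, a) (1, b), ?_⟩
    ext ⟨i, a⟩ ⟨j, b⟩
    fin_cases i <;> fin_cases j <;> simp only [repy, kroneckerMap_apply, Matrix.of_apply,
      Matrix.cons_val', Matrix.cons_val_zero, Matrix.cons_val_one, Matrix.head_cons,
      Matrix.head_fin_const, Matrix.empty_val', Matrix.cons_val_fin_one, zero_mul, Fin.mk_zero,
      Fin.mk_one]
    · exact e00 a b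
    · linear_combination A (0,1) (0, a) (1, b) * Complex.I_mul_I
    · linear_combination e10 a b - A (0,1) (0, a) (1, b) * Complex.I_mul_I
    · exact e11 a b
  · -- α = z
    subst h
    have e01 : ∀ a b, A 1 (0, a) (1, b) = 0 := by
      intro a b
      have h := key (1,1) 0 1 a b
      rw [repz, charzz] at h
      simp [Fin.sum_univ_two] at h
      linear_combination -h / 2
    have e10 : ∀ a b, A 1 (1, a) (0, b) = 0 := by
      intro a b
      have h := key (1,1) 1 0 a b
      rw [repz, charzz] at h
      simp [Fin.sum_univ_two] at h
      linear_combination -h / 2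
    have e11 : ∀ a b, A 1 (1, a) (1, b) = -A 1 (0, a) (0, b) := by
      intro a b
      have h := key (1,0) 1 1 a b
      rw [repx, charzx] at h
      simp [Fin.sum_univ_two] at h
      linear_combination h
    refine ⟨Matrix.of fun a b => A 1 (0, a) (0, b), ?_⟩
    ext ⟨i, a⟩ ⟨j, b⟩
    fin_cases i <;> fin_cases j <;> simp [show ((1 : ZMod 2), (1 : ZMod 2)) = 1 from rfl, repz, rep1, kroneckerMap_apply, e01, e10, e11]
end
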